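/- arXiv:math/0505077 — 5 statements merged into one kernel-verified Lean document; each statement's English description precedes it below -/
import Mathlib

section
/- For every g ∈ U(n) there exists a skew-Hermitian matrix ζ with exp(ζ) = g such that for every skew-Hermitian ξ with exp(ξ) = g one has [ζ, ξ] = 0. -/
open Matrix

/-! Define `ζ := cfc (fun z ↦ arg z * I) g`, the principal logarithm of `g`. It is skew-adjoint
since `arg` is real, and `exp ζ = g` because the spectrum of `g` lies on the unit circle, where
`exp (arg z * I) = z`; this needs `arg` to be continuous on the spectrum, which is automatic for a
matrix since its spectrum is finite. If `exp ξ = g` then `ξ` commutes with `g`, hence with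
`star g` (Fuglede), hence with every element of the functional calculus of `g`,
in particular `ζ`. -/

namespace CStarAlgebra

open Complex

variable {A : Type*} [CStarAlgebra A]

noncomputable def principalLog (a : A) : A :=
  cfc (fun z : ℂ ↦ (arg z : ℂ) * I) a

theorem star_principalLog (a : A) : star (principalLog a) = -principalLog a := by
  rw [principalLog, ← cfc_star, ← cfc_neg]
  congr! 2 with z
  simp [conj_ofReal]

theorem exp_principalLog {u : A} (hu : u ∈ unitary A)
    (hcont : ContinuousOn (fun z : ℂ ↦ (arg z : ℂ) * I) (spectrum ℂ u)) :
    NormedSpace.exp (principalLog u) = u := by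
  have : IsStarNormal u := isStarNormal_of_mem_unitary hu
  rw [principalLog, ← CFC.complex_exp_eq_normedSpace_exp,
    ← cfc_comp Complex.exp _ u (hg := continuous_exp.continuousOn) (hf := hcont)]
  conv_rhs => rw [← cfc_id ℂ u]
  refine cfc_congr fun z hz ↦ ?_
  simpa [spectrum.norm_eq_one_of_unitary hu hz] using norm_mul_exp_arg_mul_I z

theorem _root_.Commute.principalLog_left {u b : A} (hu : u ∈ unitary A) (h : Commute u b) :
    Commute (principalLog u) b :=
  have : IsStarNormal u := isStarNormal_of_mem_unitary hu
  h.cfc (IsStarNormal.commute_star_left this h) _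

end CStarAlgebra

/-- For every `g ∈ U(n)` there exists a skew-Hermitian `ζ` with `exp ζ = g` commuting with
every skew-Hermitian `ξ` satisfying `exp ξ = g`. -/
theorem stmt_1 (n : ℕ) (g : Matrix.unitaryGroup (Fin n) ℂ) :
    ∃ ζ : Matrix (Fin n) (Fin n) ℂ, ζᴴ = -ζ ∧
      NormedSpace.exp ζ = (g : Matrix (Fin n) (Fin n) ℂ) ∧
      ∀ ξ : Matrix (Fin n) (Fin n) ℂ, ξᴴ = -ξ →
        NormedSpace.exp ξ = (g : Matrix (Fin n) (Fin n) ℂ) → ζ * ξ - ξ * ζ = 0 := by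
  let _ : CStarAlgebra (Matrix (Fin n) (Fin n) ℂ) := Matrix.instCStarAlgebra
  refine ⟨CStarAlgebra.principalLog (g : Matrix (Fin n) (Fin n) ℂ),
    CStarAlgebra.star_principalLog _, CStarAlgebra.exp_principalLog g.2
      ((Matrix.finite_spectrum _).continuousOn _), fun ξ _ hξ ↦ ?_⟩
  have hcomm : Commute (g : Matrix (Fin n) (Fin n) ℂ) ξ := hξ ▸ (Commute.refl ξ).exp_left
  exact sub_eq_zero_of_eq (hcomm.principalLog_left g.2).eq
end

section
/- Let g ∈ SO(E) be a special orthogonal transformation of a finite-dimensional real inner product space E such that 1 is not an eigenvalue of g. Then the principal logarithm log₀(-g) can be written in the form ξ - πJ_ξ for some skew-adjoint ξ with exp(ξ) = g, where J_ξ is the natural unitary structure associated to ξ. -/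
/-!
Any unitary structure `J` commuting with `η` does the job: `ξ := η + πJ` is skew-adjoint,
commutes with `J`, and `exp ξ = exp η * exp (πJ) = (-g) * (-1) = g`.

Such a `J` exists once `dim E` is even. On `(ker η)ᗮ` take the polar part `η |η|⁻¹` of `η`,
where `|η| = √(η† η)`; skewness of `η` makes it a unitary structure there, so `(ker η)ᗮ`, hence
also `ker η`, is even-dimensional, and on `ker η` any unitary structure will do.
Finally `dim E` is even because `(-1) ^ dim E = det (-g) = det (exp (η / 2)) ^ 2 ≥ 0`.
-/

open scoped RealInnerProductSpace

open Module ContinuousLinearMap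

theorem LinearMap.even_finrank_of_neg_eq_mul_self {K V : Type*} [Field K] [LinearOrder K]
    [IsStrictOrderedRing K] [AddCommGroup V] [Module K V] {A B : V →ₗ[K] V}
    (hB : B.det = 1) (h : -B = A * A) : Even (finrank K V) := by
  have hdet : (-1 : K) ^ finrank K V = A.det ^ 2 := by
    rw [sq, ← map_mul, ← h, ← neg_one_smul K B, LinearMap.det_smul, hB, mul_one]
  by_contra hodd
  rw [Nat.not_even_iff_odd.mp hodd |>.neg_one_pow] at hdet
  linarith [sq_nonneg A.det]

theorem NormedSpace.exp_pi_smul_of_mul_self_eq_neg_one {A : Type*} [NormedRing A]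
    [NormedAlgebra ℝ A] [CompleteSpace A] {J : A} (hJ : J * J = -1) :
    exp (Real.pi • J) = -1 := by
  let _ : NormedAlgebra ℚ A := .restrictScalars ℚ ℝ A
  let φ := Complex.liftAux J hJ
  have hφ : Continuous φ := φ.toLinearMap.continuous_of_finiteDimensional
  have hπJ : Real.pi • J = φ (Real.pi • Complex.I) := by
    rw [map_smul, Complex.liftAux_apply_I]
  rw [hπJ, ← map_exp φ hφ, ← Complex.exp_eq_exp_ℂ, Complex.real_smul, Complex.exp_pi_mul_I,
    map_neg, map_one]

theorem even_finrank_of_exp_eq_neg {E : Type*} [NormedAddCommGroup E] [NormedSpace ℝ E]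
    [FiniteDimensional ℝ E] {g η : E →L[ℝ] E} (hdet : LinearMap.det (g : E →ₗ[ℝ] E) = 1)
    (h : NormedSpace.exp η = -g) : Even (finrank ℝ E) := by
  let _ : NormedAlgebra ℚ (E →L[ℝ] E) := .restrictScalars ℚ ℝ _
  let A := NormedSpace.exp ((1 / 2 : ℝ) • η)
  have hA : -g = A * A := by
    rw [← h, ← NormedSpace.exp_add_of_commute (Commute.refl _), ← add_smul]
    norm_num
  refine LinearMap.even_finrank_of_neg_eq_mul_self (A := A) hdet ?_
  rw [← toLinearMap_neg, hA, toLinearMap_mul]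

section UnitaryStructure

variable {E : Type*} [NormedAddCommGroup E] [InnerProductSpace ℝ E] [CompleteSpace E]

structure IsUnitaryStructure (J : E →L[ℝ] E) : Prop where
  adjoint_eq_neg : adjoint J = -J
  mul_self_eq_neg_one : J * J = -1

namespace IsUnitaryStructure

variable {J : E →L[ℝ] E}

theorem apply_apply (hJ : IsUnitaryStructure J) (v : E) : J (J v) = -v := by
  simpa using congr($(hJ.mul_self_eq_neg_one) v)

theorem inner_map_map (hJ : IsUnitaryStructure J) (u v : E) : ⟪J u, J v⟫ = ⟪u, v⟫ := by
  rw [← adjoint_inner_right, hJ.adjoint_eq_neg, neg_apply, hJ.apply_apply, neg_neg]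

theorem of_inner_map_map (hJJ : J * J = -1) (hJ : ∀ u v, ⟪J u, J v⟫ = ⟪u, v⟫) :
    IsUnitaryStructure J where
  adjoint_eq_neg := by
    refine ((eq_adjoint_iff (-J) J).mpr fun u v => ?_).symm
    have hJu : J (J u) = -u := by simpa using congr($hJJ u)
    rw [neg_apply, inner_neg_left, ← hJ, hJu, inner_neg_left, neg_neg]
  mul_self_eq_neg_one := hJJ

end IsUnitaryStructure

theorem exists_isUnitaryStructure_of_even_finrank [FiniteDimensional ℝ E]
    (h : Even (finrank ℝ E)) : ∃ J : E →L[ℝ] E, IsUnitaryStructure J := by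
  obtain ⟨m, hm⟩ := h
  have hdim : finrank ℝ E = finrank ℝ (EuclideanSpace ℂ (Fin m)) := by
    rw [hm, ← finrank_mul_finrank ℝ ℂ, Complex.finrank_real_complex, finrank_euclideanSpace_fin,
      two_mul]
  let e : E ≃ₗᵢ[ℝ] EuclideanSpace ℂ (Fin m) :=
    (stdOrthonormalBasis ℝ E).equiv (stdOrthonormalBasis ℝ _) (finCongr hdim)
  let I' : EuclideanSpace ℂ (Fin m) →L[ℝ] EuclideanSpace ℂ (Fin m) :=
    (Complex.I • ContinuousLinearMap.id ℂ _).restrictScalars ℝ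
  refine ⟨e.symm.toContinuousLinearEquiv.toContinuousLinearMap ∘L I' ∘L
    e.toContinuousLinearEquiv.toContinuousLinearMap, .of_inner_map_map ?_ fun u v => ?_⟩
  · ext v
    simp [I', smul_smul]
  · have hI (x y : EuclideanSpace ℂ (Fin m)) : ⟪Complex.I • x, Complex.I • y⟫ = ⟪x, y⟫ := by
      simp [PiLp.inner_apply, Complex.inner, mul_mul_mul_comm]
    simp [I', hI]

end UnitaryStructure

namespace IsSelfAdjoint

variable {E : Type*} [NormedAddCommGroup E] [InnerProductSpace ℝ E] [FiniteDimensional ℝ E]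
  {T : E →L[ℝ] E}

theorem inner_eq_zero_of_apply_eq_smul (hT : IsSelfAdjoint T) {a c : ℝ} {u v : E}
    (hu : T u = a • u) (hv : T v = c • v) (hac : a ≠ c) : ⟪u, v⟫ = 0 := by
  have h : a * ⟪u, v⟫ = c * ⟪u, v⟫ := by
    rw [← real_inner_smul_left, ← hu, ← real_inner_smul_right, ← hv]
    exact hT.isSymmetric u v
  exact (mul_eq_mul_right_iff.mp h).resolve_left hac

theorem ext_of_apply_eq_smul (hT : IsSelfAdjoint T) {A B : E →L[ℝ] E}
    (h : ∀ (c : ℝ) (v : E), T v = c • v → A v = B v) : A = B := by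
  refine coe_injective ((hT.isSymmetric.eigenvectorBasis rfl).toBasis.ext fun i => ?_)
  simpa using h _ _ (hT.isSymmetric.apply_eigenvectorBasis rfl i)

noncomputable def funCalc (hT : IsSelfAdjoint T) (f : ℝ → ℝ) : E →L[ℝ] E :=
  let b := hT.isSymmetric.eigenvectorBasis rfl
  ∑ i, f (hT.isSymmetric.eigenvalues rfl i) • (innerSL ℝ (b i)).smulRight (b i)

theorem funCalc_apply_of_apply_eq_smul (hT : IsSelfAdjoint T) (f : ℝ → ℝ) {c : ℝ} {v : E}
    (hv : T v = c • v) : hT.funCalc f v = f c • v := by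
  let b := hT.isSymmetric.eigenvectorBasis rfl
  have hcoeff : ∀ i, f (hT.isSymmetric.eigenvalues rfl i) * ⟪b i, v⟫ = f c * ⟪b i, v⟫ := by
    intro i
    by_cases hi : hT.isSymmetric.eigenvalues rfl i = c
    · rw [hi]
    · have hb : T (b i) = hT.isSymmetric.eigenvalues rfl i • b i := by
        exact_mod_cast hT.isSymmetric.apply_eigenvectorBasis rfl i
      rw [hT.inner_eq_zero_of_apply_eq_smul hb hv hi, mul_zero, mul_zero]
  conv_rhs => rw [← b.sum_repr' v, Finset.smul_sum]
  simp only [funCalc, sum_apply, smul_apply, smulRight_apply, innerSL_apply_apply, smul_smul,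
    hcoeff, b]

theorem isSelfAdjoint_funCalc (hT : IsSelfAdjoint T) (f : ℝ → ℝ) :
    IsSelfAdjoint (hT.funCalc f) := by
  refine LinearMap.IsSymmetric.isSelfAdjoint fun u v => ?_
  simp only [funCalc, coe_coe, sum_apply, smul_apply, smulRight_apply, innerSL_apply_apply,
    sum_inner, inner_sum, real_inner_smul_left, real_inner_smul_right]
  exact Finset.sum_congr rfl fun i _ => by rw [real_inner_comm u]; ring

theorem commute_funCalc (hT : IsSelfAdjoint T) (f : ℝ → ℝ) {A : E →L[ℝ] E}
    (hA : Commute A T) : Commute A (hT.funCalc f) :=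
  hT.ext_of_apply_eq_smul fun c v hv => by
    have hAv : T (A v) = c • A v := by
      rw [← mul_apply_eq_comp, ← hA.eq, mul_apply_eq_comp, hv, map_smul]
    simp only [mul_apply_eq_comp, hT.funCalc_apply_of_apply_eq_smul f hv,
      hT.funCalc_apply_of_apply_eq_smul f hAv, map_smul]

end IsSelfAdjoint

namespace Submodule

variable {𝕜 E : Type*} [RCLike 𝕜] [NormedAddCommGroup E] [InnerProductSpace 𝕜 E]
  (K : Submodule 𝕜 E) [CompleteSpace K]

noncomputable def extendByZero (A : K →L[𝕜] K) : E →L[𝕜] E :=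
  K.subtypeL ∘L A ∘L K.orthogonalProjectionOnto

theorem extendByZero_apply_mem (A : K →L[𝕜] K) (v : E) : K.extendByZero A v ∈ K :=
  (A _).2

theorem extendByZero_apply_of_mem_orthogonal (A : K →L[𝕜] K) {v : E} (hv : v ∈ Kᗮ) :
    K.extendByZero A v = 0 := by
  simp [extendByZero, orthogonalProjectionOnto_eq_zero_iff.mpr hv]

theorem adjoint_extendByZero [CompleteSpace E] (A : K →L[𝕜] K) :
    adjoint (K.extendByZero A) = K.extendByZero (adjoint A) := by
  simp only [extendByZero, adjoint_comp, adjoint_subtypeL, adjoint_orthogonalProjectionOnto,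
    comp_assoc]

theorem extendByZero_mul (A B : K →L[𝕜] K) :
    K.extendByZero A * K.extendByZero B = K.extendByZero (A * B) := by
  ext v
  simp [extendByZero, mul_apply_eq_comp]

theorem extendByZero_neg (A : K →L[𝕜] K) : K.extendByZero (-A) = -K.extendByZero A := by
  simp [extendByZero]

theorem extendByZero_one : K.extendByZero 1 = K.starProjection :=
  rfl

end Submodule

namespace ContinuousLinearMap

variable {E : Type*} [NormedAddCommGroup E] [InnerProductSpace ℝ E] [FiniteDimensional ℝ E]

/-- The pseudo-inverse of `|η| = √(η† η)`; it vanishes on `ker η` because `(√0)⁻¹ = 0`. -/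
noncomputable def invAbs (η : E →L[ℝ] E) : E →L[ℝ] E :=
  (IsSelfAdjoint.star_mul_self η).funCalc fun x => (√x)⁻¹

theorem isSelfAdjoint_invAbs (η : E →L[ℝ] E) : IsSelfAdjoint η.invAbs :=
  IsSelfAdjoint.isSelfAdjoint_funCalc _ _

theorem commute_invAbs {η A : E →L[ℝ] E} (hA : Commute A (star η * η)) :
    Commute A η.invAbs :=
  IsSelfAdjoint.commute_funCalc _ _ hA

theorem invAbs_apply_of_apply_eq_zero {η : E →L[ℝ] E} {v : E} (hv : η v = 0) :
    η.invAbs v = 0 := by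
  have hSv : (star η * η) v = (0 : ℝ) • v := by simp [mul_apply_eq_comp, hv]
  simp [invAbs, IsSelfAdjoint.funCalc_apply_of_apply_eq_smul _ _ hSv]

theorem star_mul_self_mul_invAbs_mul_invAbs_add_starProjection (η : E →L[ℝ] E) :
    star η * η * η.invAbs * η.invAbs + (η : E →ₗ[ℝ] E).ker.starProjection = 1 := by
  refine (IsSelfAdjoint.star_mul_self η).ext_of_apply_eq_smul fun c v hv => ?_
  have hnorm : ⟪η v, η v⟫ = c * ⟪v, v⟫ := by
    rw [← real_inner_smul_left, ← hv, mul_apply_eq_comp, star_eq_adjoint, adjoint_inner_left]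
  have hR : η.invAbs v = (√c)⁻¹ • v :=
    IsSelfAdjoint.funCalc_apply_of_apply_eq_smul _ _ hv
  rcases eq_or_ne c 0 with rfl | hc
  · have hker : v ∈ (η : E →ₗ[ℝ] E).ker := by
      simpa using hnorm
    simp [hR, Submodule.starProjection_eq_self_iff.mpr hker]
  · have hperp : v ∈ (η : E →ₗ[ℝ] E).kerᗮ := by
      refine (Submodule.mem_orthogonal _ v).mpr fun u hu => ?_
      have hu' : η u = 0 := hu
      have hSu : (star η * η) u = (0 : ℝ) • u := by simp [mul_apply_eq_comp, hu']
      exact (IsSelfAdjoint.star_mul_self η).inner_eq_zero_of_apply_eq_smul hSu hv hc.symm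
    rcases eq_or_ne v 0 with rfl | hv0
    · simp
    have hcpos : 0 < c := by
      have := real_inner_self_nonneg (x := η v)
      rw [hnorm] at this
      exact lt_of_le_of_ne (nonneg_of_mul_nonneg_left this (real_inner_self_pos.mpr hv0)) hc.symm
    have hsq : (√c)⁻¹ * ((√c)⁻¹ * c) = 1 := by
      rw [← mul_assoc, ← mul_inv, Real.mul_self_sqrt hcpos.le, inv_mul_cancel₀ hc]
    simp [mul_apply_eq_comp, hR, (Submodule.starProjection_apply_eq_zero_iff _).mpr hperp, hv,
      smul_smul, hsq]

variable {η : E →L[ℝ] E}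

theorem apply_mem_orthogonal_ker_of_adjoint_eq_neg (hη : adjoint η = -η) (v : E) :
    η v ∈ (η : E →ₗ[ℝ] E).kerᗮ := by
  refine (Submodule.mem_orthogonal _ _).mpr fun u hu => ?_
  have hu' : η u = 0 := hu
  rw [← adjoint_inner_left, hη, neg_apply, hu', neg_zero, inner_zero_left]

theorem commute_invAbs_of_adjoint_eq_neg (hη : adjoint η = -η) : Commute η η.invAbs :=
  commute_invAbs <| by
    rw [star_eq_adjoint, hη, neg_mul]
    exact ((Commute.refl η).mul_right (Commute.refl η)).neg_right

theorem mul_invAbs_mul_self_of_adjoint_eq_neg (hη : adjoint η = -η) :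
    η * η.invAbs * (η * η.invAbs) = (η : E →ₗ[ℝ] E).ker.starProjection - 1 := by
  have h := star_mul_self_mul_invAbs_mul_invAbs_add_starProjection η
  rw [star_eq_adjoint, hη, neg_mul, neg_mul, neg_mul, neg_add_eq_iff_eq_add] at h
  rw [eq_sub_iff_add_eq, h, mul_assoc, ← mul_assoc η.invAbs, ←
    (commute_invAbs_of_adjoint_eq_neg hη).eq]
  noncomm_ring

theorem even_finrank_ker_of_adjoint_eq_neg (hη : adjoint η = -η) (h : Even (finrank ℝ E)) :
    Even (finrank ℝ (η : E →ₗ[ℝ] E).ker) := by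
  set K := (η : E →ₗ[ℝ] E).ker
  have hmaps : ∀ w ∈ Kᗮ, (η * η.invAbs) w ∈ Kᗮ := fun w _ =>
    apply_mem_orthogonal_ker_of_adjoint_eq_neg hη _
  have hsq : -1 = ((η * η.invAbs : E →L[ℝ] E) : E →ₗ[ℝ] E).restrict hmaps *
      ((η * η.invAbs : E →L[ℝ] E) : E →ₗ[ℝ] E).restrict hmaps := by
    ext w
    have hw := congr($(mul_invAbs_mul_self_of_adjoint_eq_neg hη) w)
    have hPw : K.starProjection w = 0 := K.starProjection_apply_eq_zero_iff.mpr w.2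
    simp only [mul_apply_eq_comp, sub_apply, one_apply_eq_self] at hw
    rw [hPw] at hw
    simp [LinearMap.restrict_apply, hw]
  have hevenPerp := LinearMap.even_finrank_of_neg_eq_mul_self (map_one _) hsq
  rw [← K.finrank_add_finrank_orthogonal] at h
  exact (Nat.even_add.mp h).mpr hevenPerp

theorem exists_isUnitaryStructure_commute_of_adjoint_eq_neg (hη : adjoint η = -η)
    (h : Even (finrank ℝ E)) : ∃ J : E →L[ℝ] E, IsUnitaryStructure J ∧ Commute η J := by
  let K := (η : E →ₗ[ℝ] E).ker
  obtain ⟨J₀, hJ₀⟩ :=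
    exists_isUnitaryStructure_of_even_finrank (even_finrank_ker_of_adjoint_eq_neg hη h)
  let C := K.extendByZero J₀
  have hηC : η * C = 0 := by
    ext v
    exact K.extendByZero_apply_mem J₀ v
  have hCη : C * η = 0 := by
    ext v
    exact K.extendByZero_apply_of_mem_orthogonal J₀
      (apply_mem_orthogonal_ker_of_adjoint_eq_neg hη v)
  have hRC : η.invAbs * C = 0 := by
    ext v
    exact invAbs_apply_of_apply_eq_zero (K.extendByZero_apply_mem J₀ v)
  have hCC : C * C = -K.starProjection := by
    rw [K.extendByZero_mul, hJ₀.mul_self_eq_neg_one, K.extendByZero_neg, K.extendByZero_one]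
  have hCadj : adjoint C = -C := by
    rw [K.adjoint_extendByZero, hJ₀.adjoint_eq_neg, K.extendByZero_neg]
  have hηR := commute_invAbs_of_adjoint_eq_neg hη
  refine ⟨η * η.invAbs + C, ⟨?_, ?_⟩,
    ((Commute.refl η).mul_right hηR).add_right (hηC.trans hCη.symm)⟩
  · rw [← star_eq_adjoint, star_add, star_mul]
    simp only [star_eq_adjoint]
    rw [hη, hCadj, (isSelfAdjoint_invAbs η).adjoint_eq, mul_neg, ← hηR.eq, neg_add]
  · rw [add_mul, mul_add, mul_add, mul_invAbs_mul_self_of_adjoint_eq_neg hη, hCC, mul_assoc η,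
      hRC, mul_zero, ← mul_assoc C, hCη, zero_mul]
    abel

end ContinuousLinearMap

theorem stmt_8_general (E : Type*) [NormedAddCommGroup E] [InnerProductSpace ℝ E]
    [FiniteDimensional ℝ E] (g : E →L[ℝ] E)
    (hdet : LinearMap.det (g : E →ₗ[ℝ] E) = 1)
    (η : E →L[ℝ] E) (hη : ContinuousLinearMap.adjoint η = -η)
    (hηexp : NormedSpace.exp η = -g) :
    ∃ ξ J : E →L[ℝ] E, ContinuousLinearMap.adjoint ξ = -ξ ∧ NormedSpace.exp ξ = g ∧
      (∀ u v : E, ⟪J u, J v⟫ = ⟪u, v⟫) ∧ J * J = -1 ∧ ξ * J = J * ξ ∧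
      η = ξ - Real.pi • J := by
  let _ : NormedAlgebra ℚ (E →L[ℝ] E) := .restrictScalars ℚ ℝ _
  obtain ⟨J, hJ, hηJ⟩ :=
    exists_isUnitaryStructure_commute_of_adjoint_eq_neg hη (even_finrank_of_exp_eq_neg hdet hηexp)
  refine ⟨η + Real.pi • J, J, ?_, ?_, hJ.inner_map_map, hJ.mul_self_eq_neg_one,
    (hηJ.add_left ((Commute.refl J).smul_left _)).eq, by abel⟩
  · rw [map_add, map_smul, hη, hJ.adjoint_eq_neg, smul_neg, neg_add]
  · rw [NormedSpace.exp_add_of_commute (hηJ.smul_right _), hηexp,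
      NormedSpace.exp_pi_smul_of_mul_self_eq_neg_one hJ.mul_self_eq_neg_one, mul_neg_one, neg_neg]

/-- Let `g ∈ SO(E)` not have `1` as an eigenvalue.  Then the principal logarithm of `-g`
(the skew-adjoint `η` with `exp η = -g` and spectrum in `(-iπ, iπ)`, i.e. `‖η‖ < π`)
is of the form `ξ - πJ` for some skew-adjoint `ξ` with `exp ξ = g` and a unitary structure
`J` commuting with `ξ`. -/
theorem stmt_8 (E : Type*) [NormedAddCommGroup E] [InnerProductSpace ℝ E]
    [FiniteDimensional ℝ E] (g : E →L[ℝ] E)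
    (hgo : ∀ u v : E, ⟪g u, g v⟫ = ⟪u, v⟫)
    (hdet : LinearMap.det (g : E →ₗ[ℝ] E) = 1)
    (hone : ∀ v : E, g v = v → v = 0)
    (η : E →L[ℝ] E) (hη : ContinuousLinearMap.adjoint η = -η)
    (hηexp : NormedSpace.exp η = -g) (hηnorm : ‖η‖ < Real.pi) :
    ∃ ξ J : E →L[ℝ] E, ContinuousLinearMap.adjoint ξ = -ξ ∧ NormedSpace.exp ξ = g ∧
      (∀ u v : E, ⟪J u, J v⟫ = ⟪u, v⟫) ∧ J * J = -1 ∧ ξ * J = J * ξ ∧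
      η = ξ - Real.pi • J :=
  stmt_8_general E g hdet η hη hηexp
end

section
/- Let 𝒮 denote the space of rapidly decreasing ℤ-indexed complex sequences with its dual 𝒮*. Every continuous positive-semidefinite sesquilinear form on 𝒮* that is invariant under the circle action R_λ e_p = λ^{-p} e_p (for all λ ∈ S¹) and under the involution ι e_p = e_{-p} is of the form ⟨b, c⟩ = Σ_p b^p · conj(c^p) · a_p for a unique nonnegative rapidly decreasing sequence (a_p) with a_p = a_{-p}; moreover this assignment is a bijection of cones, with positive definite forms corresponding exactly to strictly positive sequences. -/
/-- Polynomial growth: the model for elements of `𝒮*`, the dual of the space of rapidly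
decreasing `ℤ`-indexed sequences. -/
def PolyGrowth (b : ℤ → ℂ) : Prop :=
  ∃ (m : ℕ) (C : ℝ), ∀ p : ℤ, ‖b p‖ ≤ C * (|(p : ℝ)| + 1) ^ m

/-- Rapidly decreasing sequences. -/
def RapidDecay (a : ℤ → ℝ) : Prop :=
  ∀ k : ℕ, ∃ C : ℝ, ∀ p : ℤ, |a p| * (|(p : ℝ)| + 1) ^ k ≤ C

/-!
Write `e_p = Pi.single p 1` and `a_p = B (e_p, e_p)`. Rotating by a `u` on the unit circle with
`u ^ (q - p) = -1` multiplies `B (e_p, e_q)` by `-1`, so the form is diagonal in the basis `e_p`;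
the involution gives `a_{-p} = a_p` and positivity gives `a_p ≥ 0`. Continuity applied to
`(|p| + 1) ^ k • e_p` bounds `(|p| + 1) ^ (2 k) a_p`, so `a` decays rapidly. Continuity applied once
more shows that cutting `b` and `c` off outside `[-N, N]` changes `B (b, c)` by `O(1 / N)`, which
extends the diagonal formula from finitely supported sequences to all of `𝒮*`. Evaluating the
formula at `(e_p, e_p)` gives uniqueness and the positive-definiteness criterion.
-/

open Complex ComplexConjugate Filter Finset Topology

lemma one_le_abs_intCast_add_one (p : ℤ) : (1 : ℝ) ≤ |(p : ℝ)| + 1 :=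
  le_add_of_nonneg_left (abs_nonneg _)

lemma summable_inv_abs_intCast_add_one_sq :
    Summable fun p : ℤ => ((|(p : ℝ)| + 1) ^ 2)⁻¹ := by
  refine (Real.summable_one_div_int_pow.mpr one_lt_two).of_norm_bounded_eventually ?_
  filter_upwards [eventually_cofinite_ne 0] with p hp
  have hp' : (0 : ℝ) < |(p : ℝ)| := abs_pos.mpr (Int.cast_ne_zero.mpr hp)
  rw [Real.norm_of_nonneg (by positivity), one_div, ← sq_abs (p : ℝ)]
  gcongr
  linarith

namespace PolyGrowth

variable {b c : ℤ → ℂ}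

lemma zero : PolyGrowth 0 := ⟨0, 0, by simp⟩

lemma single (p : ℤ) (x : ℂ) : PolyGrowth (Pi.single p x) := by
  refine ⟨0, ‖x‖, fun q => ?_⟩
  rcases eq_or_ne q p with rfl | hq <;> simp [*]

lemma of_norm_le (hb : PolyGrowth b) (h : ∀ p, ‖c p‖ ≤ ‖b p‖) : PolyGrowth c :=
  let ⟨m, C, hC⟩ := hb
  ⟨m, C, fun p => (h p).trans (hC p)⟩

lemma exists_pos_bound (hb : PolyGrowth b) :
    ∃ m : ℕ, ∃ C > 0, ∀ m' ≥ m, ∀ p, ‖b p‖ ≤ C * (|(p : ℝ)| + 1) ^ m' := by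
  obtain ⟨m, C, hC⟩ := hb
  refine ⟨m, max C 0 + 1, by positivity, fun m' hm p => (hC p).trans ?_⟩
  gcongr
  · linarith [le_max_left C 0]
  · exact one_le_abs_intCast_add_one p

lemma smul (t : ℂ) (hb : PolyGrowth b) : PolyGrowth (t • b) := by
  obtain ⟨m, C, hC⟩ := hb
  refine ⟨m, ‖t‖ * C, fun p => ?_⟩
  rw [Pi.smul_apply, smul_eq_mul, norm_mul, mul_assoc]
  exact mul_le_mul_of_nonneg_left (hC p) (norm_nonneg t)

lemma add (hb : PolyGrowth b) (hc : PolyGrowth c) : PolyGrowth (b + c) := by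
  obtain ⟨m₁, C₁, -, hC₁⟩ := hb.exists_pos_bound
  obtain ⟨m₂, C₂, -, hC₂⟩ := hc.exists_pos_bound
  refine ⟨max m₁ m₂, C₁ + C₂, fun p => (norm_add_le _ _).trans ?_⟩
  rw [add_mul]
  exact add_le_add (hC₁ _ (le_max_left _ _) p) (hC₂ _ (le_max_right _ _) p)

lemma finsetSum {ι : Type*} (s : Finset ι) {f : ι → ℤ → ℂ} (hf : ∀ i, PolyGrowth (f i)) :
    PolyGrowth (∑ i ∈ s, f i) := by
  classical
  induction s using Finset.induction with
  | empty => simpa using zero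
  | insert i s hi ih => rw [Finset.sum_insert hi]; exact (hf i).add ih

lemma mul (hb : PolyGrowth b) (hc : PolyGrowth c) : PolyGrowth (b * c) := by
  obtain ⟨m₁, C₁, hC₁⟩ := hb
  obtain ⟨m₂, C₂, hC₂⟩ := hc
  refine ⟨m₁ + m₂, C₁ * C₂, fun p => ?_⟩
  rw [Pi.mul_apply, norm_mul, pow_add, mul_mul_mul_comm]
  exact mul_le_mul (hC₁ p) (hC₂ p) (norm_nonneg _) ((norm_nonneg _).trans (hC₁ p))

lemma star (hb : PolyGrowth b) : PolyGrowth (star b) :=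
  hb.of_norm_le fun p => (norm_star (b p)).le

lemma indicator (hb : PolyGrowth b) (s : Set ℤ) : PolyGrowth (s.indicator b) :=
  hb.of_norm_le fun p => norm_indicator_le_norm_self b p

end PolyGrowth

lemma RapidDecay.summable_mul {a : ℤ → ℝ} (ha : RapidDecay a) {b : ℤ → ℂ}
    (hb : PolyGrowth b) : Summable fun p => b p * (a p : ℂ) := by
  obtain ⟨m, C, hC⟩ := hb
  obtain ⟨D, hD⟩ := ha (m + 2)
  refine (summable_inv_abs_intCast_add_one_sq.mul_left (C * D)).of_norm_bounded fun p => ?_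
  have hC0 : 0 ≤ C := nonneg_of_mul_nonneg_left ((norm_nonneg _).trans (hC p)) (by positivity)
  rw [norm_mul, Complex.norm_real, Real.norm_eq_abs, ← div_eq_mul_inv,
    le_div_iff₀ (by positivity)]
  calc ‖b p‖ * |a p| * (|(p : ℝ)| + 1) ^ 2
      ≤ C * (|(p : ℝ)| + 1) ^ m * |a p| * (|(p : ℝ)| + 1) ^ 2 := by gcongr; exact hC p
    _ = C * (|a p| * (|(p : ℝ)| + 1) ^ (m + 2)) := by ring
    _ ≤ C * D := by gcongr; exact hD p

lemma indicator_eq_sum_single (s : Finset ℤ) (b : ℤ → ℂ) :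
    (s : Set ℤ).indicator b = ∑ p ∈ s, Pi.single p (b p) := by
  funext q
  simp only [Finset.sum_apply, Finset.sum_pi_single, Set.indicator_apply, Finset.mem_coe]

lemma norm_indicator_compl_Icc_le {b : ℤ → ℂ} {C : ℝ} {m : ℕ} (hC : 0 ≤ C)
    (hb : ∀ p, ‖b p‖ ≤ C * (|(p : ℝ)| + 1) ^ m) (N : ℕ) (p : ℤ) :
    ‖(↑(Icc (-N : ℤ) N) : Set ℤ)ᶜ.indicator b p‖ ≤ C / (N + 1) * (|(p : ℝ)| + 1) ^ (m + 1) := by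
  by_cases hp : p ∈ (↑(Icc (-N : ℤ) N) : Set ℤ)
  · rw [Set.indicator_of_notMem (Set.notMem_compl_iff.mpr hp), norm_zero]
    positivity
  rw [Set.indicator_of_mem hp]
  have hNp : (N : ℝ) + 1 ≤ |(p : ℝ)| + 1 := by
    rw [Finset.coe_Icc, Set.mem_Icc, ← abs_le, not_le] at hp
    have : (N : ℝ) < |(p : ℝ)| := by exact_mod_cast hp
    linarith
  calc ‖b p‖ ≤ C * (|(p : ℝ)| + 1) ^ m := hb p
    _ = C / (N + 1) * (|(p : ℝ)| + 1) ^ m * (N + 1) := by field_simp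
    _ ≤ C / (N + 1) * (|(p : ℝ)| + 1) ^ m * (|(p : ℝ)| + 1) := by gcongr
    _ = C / (N + 1) * (|(p : ℝ)| + 1) ^ (m + 1) := by ring

lemma exists_norm_eq_one_zpow_eq_neg_one {n : ℤ} (hn : n ≠ 0) :
    ∃ u : ℂ, ‖u‖ = 1 ∧ u ^ n = -1 := by
  refine ⟨exp ((Real.pi / n : ℝ) * I), norm_exp_ofReal_mul_I _, ?_⟩
  rw [← exp_int_mul, ← exp_pi_mul_I]
  congr 1
  push_cast
  field_simp

lemma tsum_single_one_mul_conj (a : ℤ → ℝ) (p : ℤ) :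
    ∑' q, (Pi.single p 1 : ℤ → ℂ) q * conj ((Pi.single p 1 : ℤ → ℂ) q) * a q = a p := by
  rw [tsum_eq_single p fun q hq => by simp [hq]]
  simp

/-- Continuity on `𝒮*` is encoded as boundedness on each of its bounded sets
`{b | ∀ p, ‖b p‖ ≤ (|p| + 1) ^ m}`. -/
structure IsContinuousHermitianForm (B : (ℤ → ℂ) → (ℤ → ℂ) → ℂ) : Prop where
  add_left : ∀ b b' c, PolyGrowth b → PolyGrowth b' → PolyGrowth c →
    B (b + b') c = B b c + B b' c
  smul_left : ∀ (t : ℂ) (b c : ℤ → ℂ), PolyGrowth b → PolyGrowth c → B (t • b) c = t * B b c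
  conj_symm : ∀ b c, PolyGrowth b → PolyGrowth c → B c b = conj (B b c)
  bounded : ∀ m : ℕ, ∃ C : ℝ, ∀ b c : ℤ → ℂ,
    (∀ p, ‖b p‖ ≤ (|(p : ℝ)| + 1) ^ m) → (∀ p, ‖c p‖ ≤ (|(p : ℝ)| + 1) ^ m) → ‖B b c‖ ≤ C

def formDiag (B : (ℤ → ℂ) → (ℤ → ℂ) → ℂ) (p : ℤ) : ℝ :=
  (B (Pi.single p 1) (Pi.single p 1)).re

namespace IsContinuousHermitianForm

variable {B : (ℤ → ℂ) → (ℤ → ℂ) → ℂ} {b c : ℤ → ℂ}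

lemma zero_left (hB : IsContinuousHermitianForm B) (hc : PolyGrowth c) : B 0 c = 0 := by
  simpa using hB.smul_left 0 0 c .zero hc

lemma add_right (hB : IsContinuousHermitianForm B) {c' : ℤ → ℂ} (hb : PolyGrowth b)
    (hc : PolyGrowth c) (hc' : PolyGrowth c') : B b (c + c') = B b c + B b c' := by
  rw [hB.conj_symm _ _ (hc.add hc') hb, hB.add_left _ _ _ hc hc' hb, map_add,
    ← hB.conj_symm _ _ hc hb, ← hB.conj_symm _ _ hc' hb]

lemma smul_right (hB : IsContinuousHermitianForm B) (t : ℂ) (hb : PolyGrowth b)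
    (hc : PolyGrowth c) : B b (t • c) = conj t * B b c := by
  rw [hB.conj_symm _ _ (hc.smul t) hb, hB.smul_left _ _ _ hc hb, map_mul,
    ← hB.conj_symm _ _ hc hb]

lemma finsetSum_left (hB : IsContinuousHermitianForm B) {ι : Type*} (s : Finset ι)
    {f : ι → ℤ → ℂ} (hf : ∀ i, PolyGrowth (f i)) (hc : PolyGrowth c) :
    B (∑ i ∈ s, f i) c = ∑ i ∈ s, B (f i) c := by
  classical
  induction s using Finset.induction with
  | empty => simpa using hB.zero_left hc
  | insert i s hi ih =>
    rw [Finset.sum_insert hi, Finset.sum_insert hi,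
      hB.add_left _ _ _ (hf i) (.finsetSum s hf) hc, ih]

lemma finsetSum_right (hB : IsContinuousHermitianForm B) {ι : Type*} (s : Finset ι)
    {f : ι → ℤ → ℂ} (hb : PolyGrowth b) (hf : ∀ i, PolyGrowth (f i)) :
    B b (∑ i ∈ s, f i) = ∑ i ∈ s, B b (f i) := by
  rw [hB.conj_symm _ _ (.finsetSum s hf) hb, hB.finsetSum_left s hf hb, map_sum]
  exact Finset.sum_congr rfl fun i _ => (hB.conj_symm _ _ (hf i) hb).symm

lemma single_single (hB : IsContinuousHermitianForm B) (p q : ℤ) (x y : ℂ) :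
    B (Pi.single p x) (Pi.single q y) = x * conj y * B (Pi.single p 1) (Pi.single q 1) := by
  have hsingle : ∀ (r : ℤ) (z : ℂ), Pi.single r z = z • Pi.single r (1 : ℂ) := fun r z => by
    rw [← Pi.single_smul', smul_eq_mul, mul_one]
  rw [hsingle p x, hsingle q y, hB.smul_left _ _ _ (.single p 1) ((PolyGrowth.single q 1).smul y),
    hB.smul_right _ (.single p 1) (.single q 1), mul_assoc]

lemma single_one_self (hB : IsContinuousHermitianForm B) (p : ℤ) :
    B (Pi.single p 1) (Pi.single p 1) = formDiag B p :=
  (conj_eq_iff_re.mp (hB.conj_symm _ _ (.single p 1) (.single p 1)).symm).symm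

lemma norm_le_mul_mul (hB : IsContinuousHermitianForm B) (m : ℕ) :
    ∃ C : ℝ, ∀ (b c : ℤ → ℂ) (Cb Cc : ℝ), 0 < Cb → 0 < Cc →
      (∀ p, ‖b p‖ ≤ Cb * (|(p : ℝ)| + 1) ^ m) → (∀ p, ‖c p‖ ≤ Cc * (|(p : ℝ)| + 1) ^ m) →
      ‖B b c‖ ≤ C * Cb * Cc := by
  obtain ⟨C, hC⟩ := hB.bounded m
  refine ⟨C, fun b c Cb Cc hCb hCc hb hc => ?_⟩
  have hscale : ∀ (d : ℤ → ℂ) (Cd : ℝ), 0 < Cd → (∀ p, ‖d p‖ ≤ Cd * (|(p : ℝ)| + 1) ^ m) →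
      d = (Cd : ℂ) • ((Cd⁻¹ : ℝ) : ℂ) • d ∧ ∀ p, ‖(((Cd⁻¹ : ℝ) : ℂ) • d) p‖ ≤ (|(p : ℝ)| + 1) ^ m :=
    fun d Cd hCd hd => by
      refine ⟨by rw [smul_smul, ← ofReal_mul, mul_inv_cancel₀ hCd.ne', ofReal_one, one_smul],
        fun p => ?_⟩
      rw [Pi.smul_apply, smul_eq_mul, norm_mul, norm_real, Real.norm_of_nonneg (by positivity),
        inv_mul_le_iff₀ hCd]
      exact hd p
  obtain ⟨hb_eq, hb'⟩ := hscale b Cb hCb hb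
  obtain ⟨hc_eq, hc'⟩ := hscale c Cc hCc hc
  have hpb : PolyGrowth (((Cb⁻¹ : ℝ) : ℂ) • b) := PolyGrowth.smul _ ⟨m, Cb, hb⟩
  have hpc : PolyGrowth (((Cc⁻¹ : ℝ) : ℂ) • c) := PolyGrowth.smul _ ⟨m, Cc, hc⟩
  rw [hb_eq, hc_eq, hB.smul_left _ _ _ hpb (hpc.smul _), hB.smul_right _ hpb hpc, conj_ofReal,
    norm_mul, norm_mul, norm_real, norm_real, Real.norm_of_nonneg hCb.le,
    Real.norm_of_nonneg hCc.le]
  nlinarith [hC _ _ hb' hc', mul_pos hCb hCc]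

lemma rapidDecay_formDiag (hB : IsContinuousHermitianForm B) : RapidDecay (formDiag B) := by
  intro k
  obtain ⟨C, hC⟩ := hB.bounded k
  refine ⟨C, fun p => ?_⟩
  set w := |(p : ℝ)| + 1
  have hw : 1 ≤ w := one_le_abs_intCast_add_one p
  have hb : ∀ q, ‖(Pi.single p ((w ^ k : ℝ) : ℂ) : ℤ → ℂ) q‖ ≤ (|(q : ℝ)| + 1) ^ k := by
    intro q
    rcases eq_or_ne q p with rfl | hq
    · rw [Pi.single_eq_same, norm_real, Real.norm_of_nonneg (by positivity)]
    · rw [Pi.single_eq_of_ne hq, norm_zero]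
      positivity
  calc |formDiag B p| * w ^ k
      ≤ ‖B (Pi.single p 1) (Pi.single p 1)‖ * (w ^ k * w ^ k) := by
        gcongr
        · exact abs_re_le_norm _
        · exact le_mul_of_one_le_left (by positivity) (one_le_pow₀ hw)
    _ = ‖B (Pi.single p ((w ^ k : ℝ) : ℂ)) (Pi.single p ((w ^ k : ℝ) : ℂ))‖ := by
        rw [hB.single_single p p ((w ^ k : ℝ) : ℂ) ((w ^ k : ℝ) : ℂ), norm_mul, norm_mul,
          RCLike.norm_conj, norm_real, Real.norm_of_nonneg (by positivity)]
        ring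
    _ ≤ C := hC _ _ hb hb

lemma single_one_single_one_of_ne (hB : IsContinuousHermitianForm B)
    (hcirc : ∀ u : ℂ, ‖u‖ = 1 → ∀ b c, PolyGrowth b → PolyGrowth c →
      B (fun p => u ^ (-p) * b p) (fun p => u ^ (-p) * c p) = B b c)
    {p q : ℤ} (hpq : p ≠ q) : B (Pi.single p 1) (Pi.single q 1) = 0 := by
  obtain ⟨u, hu, hun⟩ := exists_norm_eq_one_zpow_eq_neg_one (sub_ne_zero.mpr hpq.symm)
  have hu0 : u ≠ 0 := norm_ne_zero_iff.mp (hu ▸ one_ne_zero)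
  have hrot : ∀ r : ℤ, (fun s => u ^ (-s) * (Pi.single r 1 : ℤ → ℂ) s) = Pi.single r (u ^ (-r)) :=
    fun r => funext fun s => by
      rw [← Pi.single_mul_right_apply (f := fun s => u ^ (-s)), mul_one]
  have hcoef : u ^ (-p) * conj (u ^ (-q)) = -1 := by
    rw [map_zpow₀, ← inv_eq_conj hu, inv_zpow', neg_neg, ← zpow_add₀ hu0, neg_add_eq_sub, hun]
  have h := hcirc u hu _ _ (.single p 1) (.single q 1)
  rw [hrot, hrot, hB.single_single, hcoef] at h
  linear_combination (-1 / 2 : ℂ) * h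

lemma single_one_single_one (hB : IsContinuousHermitianForm B)
    (hcirc : ∀ u : ℂ, ‖u‖ = 1 → ∀ b c, PolyGrowth b → PolyGrowth c →
      B (fun p => u ^ (-p) * b p) (fun p => u ^ (-p) * c p) = B b c) (p q : ℤ) :
    B (Pi.single p 1) (Pi.single q 1) = if p = q then (formDiag B p : ℂ) else 0 := by
  split_ifs with hpq
  · exact hpq ▸ hB.single_one_self p
  · exact hB.single_one_single_one_of_ne hcirc hpq

lemma indicator_indicator_eq_sum {a : ℤ → ℝ}
    (hB : IsContinuousHermitianForm B)
    (hdiag : ∀ p q, B (Pi.single p 1) (Pi.single q 1) = if p = q then (a p : ℂ) else 0)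
    (s : Finset ℤ) :
    B ((s : Set ℤ).indicator b) ((s : Set ℤ).indicator c) =
      ∑ p ∈ s, b p * conj (c p) * a p := by
  rw [indicator_eq_sum_single, indicator_eq_sum_single,
    hB.finsetSum_left _ (fun p => .single p _) (.finsetSum _ fun q => .single q _)]
  refine Finset.sum_congr rfl fun p hp => ?_
  rw [hB.finsetSum_right _ (.single p _) (fun q => .single q _), Finset.sum_eq_single_of_mem p hp]
  · rw [hB.single_single, hdiag, if_pos rfl]
  · intro q _ hqp
    rw [hB.single_single, hdiag, if_neg hqp.symm, mul_zero]

/-- The tails outside `[-N, N]` are `O(1 / N)` in the weighted norm of exponent `m + 1`, on whose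
balls `B` is still bounded. -/
lemma tendsto_indicator_Icc (hB : IsContinuousHermitianForm B) (hb : PolyGrowth b)
    (hc : PolyGrowth c) :
    Tendsto (fun N : ℕ => B ((↑(Icc (-N : ℤ) N) : Set ℤ).indicator b)
      ((↑(Icc (-N : ℤ) N) : Set ℤ).indicator c)) atTop (𝓝 (B b c)) := by
  obtain ⟨m₁, Cb, hCb, hb'⟩ := hb.exists_pos_bound
  obtain ⟨m₂, Cc, hCc, hc'⟩ := hc.exists_pos_bound
  set m := max m₁ m₂
  obtain ⟨C, hC⟩ := hB.norm_le_mul_mul (m + 1)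
  have hbm := hb' m (le_max_left _ _)
  have hcm := hc' m (le_max_right _ _)
  have key : ∀ N : ℕ, ‖B ((↑(Icc (-N : ℤ) N) : Set ℤ).indicator b)
      ((↑(Icc (-N : ℤ) N) : Set ℤ).indicator c) - B b c‖ ≤
        2 * (C * Cb * Cc) * (1 / ((N : ℝ) + 1)) := by
    intro N
    set s : Set ℤ := ↑(Icc (-N : ℤ) N)
    have hN : (0 : ℝ) < N + 1 := by positivity
    have hsplit_left : B b c = B (s.indicator b) c + B (sᶜ.indicator b) c := by
      conv_lhs => rw [← s.indicator_self_add_compl b]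
      exact hB.add_left _ _ _ (hb.indicator s) (hb.indicator sᶜ) hc
    have hsplit_right : B (s.indicator b) c =
        B (s.indicator b) (s.indicator c) + B (s.indicator b) (sᶜ.indicator c) := by
      conv_lhs => rw [← s.indicator_self_add_compl c]
      exact hB.add_right (hb.indicator s) (hc.indicator s) (hc.indicator sᶜ)
    have hm₁ : m₁ ≤ m + 1 := (le_max_left _ _).trans m.le_succ
    have hm₂ : m₂ ≤ m + 1 := (le_max_right _ _).trans m.le_succ
    calc ‖B (s.indicator b) (s.indicator c) - B b c‖
        = ‖B (sᶜ.indicator b) c + B (s.indicator b) (sᶜ.indicator c)‖ := by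
          rw [hsplit_left, hsplit_right, ← norm_neg]
          ring_nf
      _ ≤ ‖B (sᶜ.indicator b) c‖ + ‖B (s.indicator b) (sᶜ.indicator c)‖ := norm_add_le _ _
      _ ≤ C * (Cb / (N + 1)) * Cc + C * Cb * (Cc / (N + 1)) := add_le_add
          (hC _ _ _ _ (by positivity) hCc (norm_indicator_compl_Icc_le hCb.le hbm N) (hc' _ hm₂))
          (hC _ _ _ _ hCb (by positivity)
            (fun p => (norm_indicator_le_norm_self b p).trans (hb' _ hm₁ p))
            (norm_indicator_compl_Icc_le hCc.le hcm N))
      _ = 2 * (C * Cb * Cc) * (1 / ((N : ℝ) + 1)) := by ring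
  refine tendsto_sub_nhds_zero_iff.mp (squeeze_zero_norm key ?_)
  simpa using tendsto_one_div_add_atTop_nhds_zero_nat.const_mul (2 * (C * Cb * Cc))

lemma eq_tsum {a : ℤ → ℝ} (hB : IsContinuousHermitianForm B)
    (hdiag : ∀ p q, B (Pi.single p 1) (Pi.single q 1) = if p = q then (a p : ℂ) else 0)
    (ha : RapidDecay a) (hb : PolyGrowth b) (hc : PolyGrowth c) :
    B b c = ∑' p, b p * conj (c p) * a p := by
  have hsum : Summable fun p => b p * conj (c p) * (a p : ℂ) := ha.summable_mul (hb.mul hc.star)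
  refine tendsto_nhds_unique (hB.tendsto_indicator_Icc hb hc) ?_
  exact (hsum.hasSum.comp tendsto_Icc_neg).congr fun _ =>
    (hB.indicator_indicator_eq_sum hdiag _).symm

end IsContinuousHermitianForm

lemma formDiag_neg {B : (ℤ → ℂ) → (ℤ → ℂ) → ℂ}
    (hinv : ∀ b c, PolyGrowth b → PolyGrowth c → B (fun p => b (-p)) (fun p => c (-p)) = B b c)
    (p : ℤ) : formDiag B (-p) = formDiag B p := by
  have h : (fun r => (Pi.single p 1 : ℤ → ℂ) (-r)) = Pi.single (-p) 1 := by
    funext r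
    simp only [Pi.single_apply, neg_eq_iff_eq_neg]
  simpa only [formDiag, h] using congrArg re (hinv _ _ (.single p 1) (.single p 1))

lemma formDiag_eq_of_forall_eq_tsum {B : (ℤ → ℂ) → (ℤ → ℂ) → ℂ} {a : ℤ → ℝ}
    (hform : ∀ b c, PolyGrowth b → PolyGrowth c → B b c = ∑' p, b p * conj (c p) * a p) :
    formDiag B = a :=
  funext fun p => by
    rw [formDiag, hform _ _ (.single p 1) (.single p 1), tsum_single_one_mul_conj, ofReal_re]

lemma posDef_iff_pos {B : (ℤ → ℂ) → (ℤ → ℂ) → ℂ} {a : ℤ → ℝ}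
    (hform : ∀ b c, PolyGrowth b → PolyGrowth c → B b c = ∑' p, b p * conj (c p) * a p)
    (ha : RapidDecay a) (ha₀ : ∀ p, 0 ≤ a p) :
    (∀ b, PolyGrowth b → b ≠ 0 → 0 < (B b b).re) ↔ ∀ p, 0 < a p := by
  refine ⟨fun h p => ?_, fun h b hb hb₀ => ?_⟩
  · have hp := h _ (.single p 1) (Pi.single_ne_zero_iff.mpr one_ne_zero)
    rwa [hform _ _ (.single p 1) (.single p 1), tsum_single_one_mul_conj, ofReal_re] at hp
  · obtain ⟨p, hp⟩ := Function.ne_iff.mp hb₀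
    have hsum : Summable fun q => b q * conj (b q) * (a q : ℂ) := ha.summable_mul (hb.mul hb.star)
    have hre : ∀ q, (b q * conj (b q) * (a q : ℂ)).re = normSq (b q) * a q := fun q => by
      rw [mul_conj, ← ofReal_mul, ofReal_re]
    have hsum_re : Summable fun q => normSq (b q) * a q := (hsum.mapL reCLM).congr hre
    rw [hform b b hb hb, re_tsum hsum]
    simp only [hre]
    exact hsum_re.tsum_pos (fun q => mul_nonneg (normSq_nonneg _) (ha₀ q)) p
      (mul_pos (normSq_pos.mpr hp) (h p))

/-- Every continuous positive-semidefinite sesquilinear form on `𝒮*` invariant under the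
circle action `R_λ e_p = λ^{-p} e_p` and the involution `ι e_p = e_{-p}` is
`⟨b, c⟩ = Σ_p b^p conj(c^p) a_p` for a unique nonnegative rapidly decreasing symmetric
sequence `(a_p)`, positive definite forms corresponding to strictly positive sequences. -/
theorem stmt_11 (B : (ℤ → ℂ) → (ℤ → ℂ) → ℂ)
    (hadd1 : ∀ b b' c, PolyGrowth b → PolyGrowth b' → PolyGrowth c →
      B (b + b') c = B b c + B b' c)
    (hsmul1 : ∀ (t : ℂ) (b c : ℤ → ℂ), PolyGrowth b → PolyGrowth c →
      B (t • b) c = t * B b c)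
    (hsym : ∀ b c, PolyGrowth b → PolyGrowth c → B c b = (starRingEnd ℂ) (B b c))
    (hpos : ∀ b, PolyGrowth b → 0 ≤ (B b b).re ∧ (B b b).im = 0)
    (hcont : ∀ m : ℕ, ∃ C : ℝ, ∀ b c : ℤ → ℂ,
      (∀ p, ‖b p‖ ≤ (|(p : ℝ)| + 1) ^ m) → (∀ p, ‖c p‖ ≤ (|(p : ℝ)| + 1) ^ m) →
      ‖B b c‖ ≤ C)
    (hcirc : ∀ u : ℂ, ‖u‖ = 1 → ∀ b c, PolyGrowth b → PolyGrowth c →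
      B (fun p => u ^ (-p) * b p) (fun p => u ^ (-p) * c p) = B b c)
    (hinv : ∀ b c, PolyGrowth b → PolyGrowth c →
      B (fun p => b (-p)) (fun p => c (-p)) = B b c) :
    ∃! a : ℤ → ℝ, RapidDecay a ∧ (∀ p, 0 ≤ a p) ∧ (∀ p, a (-p) = a p) ∧
      (∀ b c, PolyGrowth b → PolyGrowth c →
        B b c = ∑' p : ℤ, b p * (starRingEnd ℂ) (c p) * (a p : ℂ)) ∧
      ((∀ b, PolyGrowth b → b ≠ 0 → 0 < (B b b).re) ↔ ∀ p, 0 < a p) := by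
  have hB : IsContinuousHermitianForm B := ⟨hadd1, hsmul1, hsym, hcont⟩
  have hdecay := hB.rapidDecay_formDiag
  have hnonneg : ∀ p, 0 ≤ formDiag B p := fun p => (hpos _ (.single p 1)).1
  have hform : ∀ b c, PolyGrowth b → PolyGrowth c → B b c = ∑' p, b p * conj (c p) * formDiag B p :=
    fun _ _ => hB.eq_tsum (hB.single_one_single_one hcirc) hdecay
  refine ⟨formDiag B, ⟨hdecay, hnonneg, formDiag_neg hinv, hform,
    posDef_iff_pos hform hdecay hnonneg⟩, ?_⟩
  rintro a ⟨-, -, -, ha, -⟩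
  exact (formDiag_eq_of_forall_eq_tsum ha).symm
end

section
/- On a real Hilbert space H with unitary structure J (orthogonal, J² = -1) and another unitary structure K, write the identity in block form with respect to the ±i-eigenspace decompositions of the complexifications. Then the off-diagonal blocks b = ¼(I - iK)(I + iJ)P can be rewritten as ¼(K(J - K) + i(J - K))P; hence if J - K is Hilbert-Schmidt then the off-diagonal blocks are Hilbert-Schmidt. -/
/-- An operator on a Hilbert space is Hilbert-Schmidt if `Σᵢ ‖Teᵢ‖² < ∞` for (every)
Hilbert basis. -/
def IsHilbertSchmidt {H : Type*} [NormedAddCommGroup H] [InnerProductSpace ℂ H]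
    (T : H →L[ℂ] H) : Prop :=
  ∀ (ι : Type) (b : HilbertBasis ι ℂ H), Summable fun i => ‖T (b i)‖ ^ 2

/-!
Since `K² = -1`, expanding gives `(1 - iK)(1 + iJ) = 1 + KJ + i(J - K) = K(J - K) + i(J - K)`,
i.e. the block is `¼ (K + i) (J - K) P`. Hilbert-Schmidt operators form a two-sided ideal:
stability under left composition is the bound `‖A T e‖ ≤ ‖A‖ ‖T e‖`, and right composition
reduces to it because, by Parseval applied twice, `Σᵢ ‖T eᵢ‖² = Σᵢ,ⱼ |⟪eⱼ, T eᵢ⟫|² = Σⱼ ‖T† eⱼ‖²`.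
-/

open ContinuousLinearMap
open scoped InnerProductSpace

theorem one_sub_I_smul_mul_one_add_I_smul {A : Type*} [Ring A] [Algebra ℂ A] {J K : A}
    (hK : K * K = -1) :
    (1 - Complex.I • K) * (1 + Complex.I • J) = K * (J - K) + Complex.I • (J - K) := by
  have hI : (Complex.I • K) * (Complex.I • J) = -(K * J) := by
    rw [smul_mul_smul_comm, Complex.I_mul_I, neg_one_smul]
  rw [sub_mul, mul_add, mul_add, one_mul, one_mul, mul_one, hI, mul_sub, smul_sub, hK]
  abel

namespace HilbertBasis

variable {𝕜 E ι : Type*} [RCLike 𝕜] [NormedAddCommGroup E] [InnerProductSpace 𝕜 E]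

theorem hasSum_norm_inner_sq (b : HilbertBasis ι 𝕜 E) (x : E) :
    HasSum (fun i => ‖⟪b i, x⟫_𝕜‖ ^ 2) (‖x‖ ^ 2) := by
  have h := lp.hasSum_norm (p := 2) (by norm_num) (b.repr x)
  simp only [ENNReal.toReal_ofNat, Real.rpow_two, b.repr.norm_map] at h
  simpa only [b.repr_apply_apply] using h

theorem summable_norm_sq_adjoint_apply [CompleteSpace E] (b : HilbertBasis ι 𝕜 E)
    {T : E →L[𝕜] E} (hT : Summable fun i => ‖T (b i)‖ ^ 2) :
    Summable fun i => ‖adjoint T (b i)‖ ^ 2 := by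
  set f : ι × ι → ℝ := fun p => ‖⟪b p.2, T (b p.1)⟫_𝕜‖ ^ 2
  have hf : 0 ≤ f := fun p => by positivity
  have hrow (i : ι) : HasSum (fun j => f (i, j)) (‖T (b i)‖ ^ 2) :=
    b.hasSum_norm_inner_sq (T (b i))
  have hcol (j : ι) : HasSum (fun i => f (i, j)) (‖adjoint T (b j)‖ ^ 2) := by
    convert b.hasSum_norm_inner_sq (adjoint T (b j)) using 2 with i
    rw [adjoint_inner_right, ← norm_inner_symm]
  have hsum : Summable f :=
    (summable_prod_of_nonneg hf).2 ⟨fun i => (hrow i).summable,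
      hT.congr fun i => (hrow i).tsum_eq.symm⟩
  have hswap : Summable (f ∘ Prod.swap) := (Equiv.prodComm ι ι).summable_iff.2 hsum
  exact ((summable_prod_of_nonneg fun p => hf p.swap).1 hswap).2.congr
    fun j => (hcol j).tsum_eq

end HilbertBasis

namespace IsHilbertSchmidt

variable {H : Type*} [NormedAddCommGroup H] [InnerProductSpace ℂ H]

theorem mul_left (A : H →L[ℂ] H) {T : H →L[ℂ] H} (hT : IsHilbertSchmidt T) :
    IsHilbertSchmidt (A * T) := fun ι b =>
  (hT ι b |>.mul_left (‖A‖ ^ 2)).of_nonneg_of_le (fun _ => by positivity) fun i =>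
    calc ‖A (T (b i))‖ ^ 2 ≤ (‖A‖ * ‖T (b i)‖) ^ 2 := by gcongr; exact A.le_opNorm _
      _ = ‖A‖ ^ 2 * ‖T (b i)‖ ^ 2 := mul_pow _ _ _

variable [CompleteSpace H]

theorem adjoint {T : H →L[ℂ] H} (hT : IsHilbertSchmidt T) :
    IsHilbertSchmidt (ContinuousLinearMap.adjoint T) := fun ι b =>
  b.summable_norm_sq_adjoint_apply (hT ι b)

theorem mul_right {T : H →L[ℂ] H} (hT : IsHilbertSchmidt T) (B : H →L[ℂ] H) :
    IsHilbertSchmidt (T * B) := by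
  simpa only [← star_eq_adjoint, star_mul, star_star] using (hT.adjoint.mul_left (star B)).adjoint

end IsHilbertSchmidt

theorem stmt_18_general (H : Type*) [NormedAddCommGroup H] [InnerProductSpace ℂ H] [CompleteSpace H]
    (J K P : H →L[ℂ] H)
    (hK2 : K * K = -1) :
    (1 / 4 : ℂ) • ((1 - Complex.I • K) * (1 + Complex.I • J) * P) =
      (1 / 4 : ℂ) • ((K * (J - K) + Complex.I • (J - K)) * P) ∧
    (IsHilbertSchmidt (J - K) →
      IsHilbertSchmidt ((1 / 4 : ℂ) • ((1 - Complex.I • K) * (1 + Complex.I • J) * P))) := by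
  rw [one_sub_I_smul_mul_one_add_I_smul hK2]
  refine ⟨rfl, fun hJK => ?_⟩
  have hfactor : (1 / 4 : ℂ) • ((K * (J - K) + Complex.I • (J - K)) * P) =
      ((1 / 4 : ℂ) • (K + Complex.I • 1)) * (J - K) * P := by
    simp only [smul_mul_assoc, add_mul, one_mul]
  rw [hfactor]
  exact (hJK.mul_left _).mul_right P

/-- With `J, K` unitary structures (complexified: skew-adjoint with square `-1`) and `P` a
projection, the off-diagonal block `¼(I - iK)(I + iJ)P` equals `¼(K(J-K) + i(J-K))P`;
hence if `J - K` is Hilbert-Schmidt then this block is Hilbert-Schmidt. -/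
theorem stmt_18 (H : Type*) [NormedAddCommGroup H] [InnerProductSpace ℂ H] [CompleteSpace H]
    (J K P : H →L[ℂ] H)
    (hJa : ContinuousLinearMap.adjoint J = -J) (hKa : ContinuousLinearMap.adjoint K = -K)
    (hJ2 : J * J = -1) (hK2 : K * K = -1) (hP : P * P = P) :
    (1 / 4 : ℂ) • ((1 - Complex.I • K) * (1 + Complex.I • J) * P) =
      (1 / 4 : ℂ) • ((K * (J - K) + Complex.I • (J - K)) * P) ∧
    (IsHilbertSchmidt (J - K) →
      IsHilbertSchmidt ((1 / 4 : ℂ) • ((1 - Complex.I • K) * (1 + Complex.I • J) * P))) :=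
  stmt_18_general H J K P hK2
end

section
/- Let H be the Hilbert completion of the ℤ-indexed sequence space with strictly positive symmetric rapidly decreasing weights (a_p) such that (a_p/a_{p+1}) is bounded. The operator J defined by J e_p = i e_p for p ≤ 0 and J e_p = -i e_p for p > 0 is a unitary operator on H with J² = -1 such that J ± iI are not finite rank, and the commutator [J, z] with the shift z is finite rank (hence Hilbert-Schmidt); therefore z lies in the restricted general linear group gl_J(H). -/
/-- The diagonal operator on `ℤ`-indexed sequences with diagonal coefficients `c`. -/
def diagOp (c : ℤ → ℂ) : (ℤ → ℂ) →ₗ[ℂ] (ℤ → ℂ) where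
  toFun b := fun p => c p * b p
  map_add' b b' := by funext p; simp [mul_add]
  map_smul' t b := by funext p; simp [smul_eq_mul]; ring

/-- The shift operator `z`, `(zb)^p = b^{p+1}`. -/
def shiftOp : (ℤ → ℂ) →ₗ[ℂ] (ℤ → ℂ) where
  toFun b := fun p => b (p + 1)
  map_add' _ _ := rfl
  map_smul' _ _ := rfl

/-- The polarising operator `J e_p = -(-1)^{sign p} i e_p`. -/
noncomputable def Jop : (ℤ → ℂ) →ₗ[ℂ] (ℤ → ℂ) :=
  diagOp fun p => if p ≤ 0 then Complex.I else -Complex.I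

lemma indep_single {f : ℕ → ℤ} (hf : Function.Injective f) :
    LinearIndependent ℂ (fun n : ℕ => (Pi.single (f n) 1 : ℤ → ℂ)) := by
  rw [linearIndependent_iff']
  intro s g hsum i hi
  have h := congrFun hsum (f i)
  simp only [Finset.sum_apply, Pi.smul_apply, Pi.zero_apply, smul_eq_mul] at h
  rw [Finset.sum_eq_single i] at h
  · simpa using h
  · intro j hj hne
    have hne' : f i ≠ f j := fun hh => hne (hf hh.symm)
    rw [Pi.single_apply, if_neg hne']
    ring
  · intro h'; exact absurd hi h'

lemma notFinite_of_mem {S : Submodule ℂ (ℤ → ℂ)} (f : ℕ → ℤ) (hf : Function.Injective f)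
    (hmem : ∀ n, (Pi.single (f n) 1 : ℤ → ℂ) ∈ S) : ¬ Module.Finite ℂ S := by
  intro hfin
  have hli : LinearIndependent ℂ (fun n : ℕ => (⟨Pi.single (f n) 1, hmem n⟩ : S)) := by
    apply LinearIndependent.of_comp S.subtype
    exact indep_single hf
  haveI : Finite ℕ := hli.finite_of_isNoetherian
  exact not_finite ℕ

lemma Kapply (b : ℤ → ℂ) :
    (Jop ∘ₗ shiftOp - shiftOp ∘ₗ Jop) b = Pi.single 0 (2 * Complex.I * b 1) := by
  funext q
  simp only [LinearMap.sub_apply, LinearMap.comp_apply, Pi.sub_apply, Jop, diagOp, shiftOp,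
    LinearMap.coe_mk, AddHom.coe_mk, Pi.single_apply]
  by_cases hq : q = 0
  · subst hq
    rw [if_pos rfl, if_pos le_rfl, if_neg (by norm_num)]
    ring
  · rw [if_neg hq]
    rcases lt_trichotomy q 0 with h | h | h
    · rw [if_pos (by omega), if_pos (by omega)]; ring
    · exact absurd h hq
    · rw [if_neg (by omega), if_neg (by omega)]; ring

/-- On the weighted `ℓ²` completion `H` with strictly positive symmetric rapidly decreasing
weights `(a_p)` with bounded ratios, the operator `J` is unitary with `J² = -1`, `J ± iI`
are not finite rank, the commutator `[J, z]` is finite rank and Hilbert-Schmidt, and the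
shift `z` is an invertible bounded operator, so `z ∈ gl_J(H)`. -/
theorem stmt_19 (a : ℤ → ℝ) (hpos : ∀ p, 0 < a p) (hsym : ∀ p, a (-p) = a p)
    (hrd : ∀ k : ℕ, ∃ C : ℝ, ∀ p : ℤ, |a p| * (|(p : ℝ)| + 1) ^ k ≤ C)
    (hratio : ∃ M : ℝ, ∀ p : ℤ, a p / a (p + 1) ≤ M) :
    (∀ b : ℤ → ℂ, Summable (fun p : ℤ => ‖b p‖ ^ 2 * a p) →
      Summable (fun p : ℤ => ‖Jop b p‖ ^ 2 * a p) ∧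
      ∑' p : ℤ, ‖Jop b p‖ ^ 2 * a p = ∑' p : ℤ, ‖b p‖ ^ 2 * a p) ∧
    (∀ b : ℤ → ℂ, Jop (Jop b) = -b) ∧
    ¬ Module.Finite ℂ (LinearMap.range (Jop + Complex.I • LinearMap.id)) ∧
    ¬ Module.Finite ℂ (LinearMap.range (Jop - Complex.I • LinearMap.id)) ∧
    Module.Finite ℂ (LinearMap.range (Jop ∘ₗ shiftOp - shiftOp ∘ₗ Jop)) ∧
    Summable (fun p : ℤ =>
      (∑' q : ℤ, ‖(Jop ∘ₗ shiftOp - shiftOp ∘ₗ Jop) (Pi.single p 1) q‖ ^ 2 * a q) / a p) ∧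
    Function.Bijective shiftOp ∧
    (∃ C : ℝ, ∀ b : ℤ → ℂ, Summable (fun p : ℤ => ‖b p‖ ^ 2 * a p) →
      Summable (fun p : ℤ => ‖b (p + 1)‖ ^ 2 * a p) ∧
      ∑' p : ℤ, ‖b (p + 1)‖ ^ 2 * a p ≤ C * ∑' p : ℤ, ‖b p‖ ^ 2 * a p) := by
  have hJnorm : ∀ (b : ℤ → ℂ) (p : ℤ), ‖Jop b p‖ = ‖b p‖ := by
    intro b p
    show ‖(if p ≤ 0 then Complex.I else -Complex.I) * b p‖ = ‖b p‖
    rw [norm_mul]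
    split_ifs <;> simp [Complex.norm_I]
  refine ⟨?_, ?_, ?_, ?_, ?_, ?_, ?_, ?_⟩
  · intro b hb
    have heq : (fun p : ℤ => ‖Jop b p‖ ^ 2 * a p) = fun p : ℤ => ‖b p‖ ^ 2 * a p := by
      funext p; rw [hJnorm]
    rw [heq]
    exact ⟨hb, rfl⟩
  · intro b
    funext p
    show (if p ≤ 0 then Complex.I else -Complex.I) *
        ((if p ≤ 0 then Complex.I else -Complex.I) * b p) = -b p
    split_ifs <;> simp [← mul_assoc, Complex.I_mul_I]
  · apply notFinite_of_mem (fun n => -(n : ℤ)) (fun m n h => by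
      simp only [neg_inj, Nat.cast_inj] at h; exact h)
    intro n
    refine ⟨Pi.single (-(n:ℤ)) (2 * Complex.I)⁻¹, ?_⟩
    funext q
    show (if q ≤ 0 then Complex.I else -Complex.I) *
        (Pi.single (-(n:ℤ)) (2 * Complex.I)⁻¹ : ℤ → ℂ) q +
        Complex.I * (Pi.single (-(n:ℤ)) (2 * Complex.I)⁻¹ : ℤ → ℂ) q
        = (Pi.single (-(n:ℤ)) 1 : ℤ → ℂ) q
    rw [Pi.single_apply, Pi.single_apply]
    by_cases hq : q = -(n : ℤ)
    · rw [if_pos hq, if_pos hq, if_pos (by omega)]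
      have h2 : (2 * Complex.I) ≠ 0 := by simp [Complex.I_ne_zero]
      field_simp
      ring
    · rw [if_neg hq, if_neg hq]
      split_ifs <;> ring
  · apply notFinite_of_mem (fun n => (n : ℤ) + 1) (fun m n h => by
      simp only [add_left_inj, Nat.cast_inj] at h; exact h)
    intro n
    refine ⟨Pi.single ((n:ℤ) + 1) (-(2 * Complex.I))⁻¹, ?_⟩
    funext q
    show (if q ≤ 0 then Complex.I else -Complex.I) *
        (Pi.single ((n:ℤ) + 1) (-(2 * Complex.I))⁻¹ : ℤ → ℂ) q -
        Complex.I * (Pi.single ((n:ℤ) + 1) (-(2 * Complex.I))⁻¹ : ℤ → ℂ) q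
        = (Pi.single ((n:ℤ) + 1) 1 : ℤ → ℂ) q
    rw [Pi.single_apply, Pi.single_apply]
    by_cases hq : q = (n : ℤ) + 1
    · rw [if_pos hq, if_pos hq, if_neg (by omega)]
      have h2 : (-(2 * Complex.I)) ≠ 0 := by simp [Complex.I_ne_zero]
      field_simp
      ring
    · rw [if_neg hq, if_neg hq]
      split_ifs <;> ring
  · set K := Jop ∘ₗ shiftOp - shiftOp ∘ₗ Jop with hKdef
    apply Module.Finite.of_surjective
      (K.rangeRestrict ∘ₗ LinearMap.single ℂ (fun _ : ℤ => ℂ) (1 : ℤ))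
    rintro ⟨y, b, rfl⟩
    refine ⟨b 1, ?_⟩
    apply Subtype.ext
    show K (Pi.single 1 (b 1)) = K b
    rw [Kapply, Kapply]
    simp
  · apply summable_of_ne_finset_zero (s := ({1} : Finset ℤ))
    intro p hp
    have h1 : (Pi.single p 1 : ℤ → ℂ) 1 = 0 := by
      rw [Pi.single_apply, if_neg]
      simpa using fun h => hp (by simp [h])
    have h0 : (Jop ∘ₗ shiftOp - shiftOp ∘ₗ Jop) (Pi.single p 1) = 0 := by
      rw [Kapply, h1]; simp
    rw [h0]
    simp
  · constructor
    · intro b b' h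
      funext p
      have h2 : b (p - 1 + 1) = b' (p - 1 + 1) := congrFun h (p - 1)
      have h3 : p - 1 + 1 = p := by ring
      rwa [h3] at h2
    · intro b
      refine ⟨fun p => b (p - 1), ?_⟩
      funext p
      show b (p + 1 - 1) = b p
      norm_num
  · obtain ⟨M, hM⟩ := hratio
    refine ⟨M, fun b hb => ?_⟩
    have hg : Summable (fun p : ℤ => ‖b (p + 1)‖ ^ 2 * a (p + 1)) :=
      ((Equiv.addRight (1:ℤ)).summable_iff (f := fun p => ‖b p‖ ^ 2 * a p)).mpr hb
    have hle : ∀ p : ℤ, ‖b (p + 1)‖ ^ 2 * a p ≤ M * (‖b (p + 1)‖ ^ 2 * a (p + 1)) := by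
      intro p
      have h1 : a p ≤ M * a (p + 1) := by
        rw [← div_le_iff₀ (hpos (p + 1))] at *
        exact hM p
      calc ‖b (p + 1)‖ ^ 2 * a p ≤ ‖b (p + 1)‖ ^ 2 * (M * a (p + 1)) := by
            apply mul_le_mul_of_nonneg_left h1 (by positivity)
        _ = M * (‖b (p + 1)‖ ^ 2 * a (p + 1)) := by ring
    have hs : Summable (fun p : ℤ => ‖b (p + 1)‖ ^ 2 * a p) := by
      exact Summable.of_nonneg_of_le
        (fun p => mul_nonneg (by positivity) (hpos p).le) hle (hg.mul_left M)
    refine ⟨hs, ?_⟩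
    calc ∑' p : ℤ, ‖b (p + 1)‖ ^ 2 * a p
        ≤ ∑' p : ℤ, M * (‖b (p + 1)‖ ^ 2 * a (p + 1)) := Summable.tsum_le_tsum hle hs (hg.mul_left M)
      _ = M * ∑' p : ℤ, ‖b (p + 1)‖ ^ 2 * a (p + 1) := tsum_mul_left
      _ = M * ∑' p : ℤ, ‖b p‖ ^ 2 * a p :=
          congrArg (M * ·) ((Equiv.addRight (1:ℤ)).tsum_eq (fun p => ‖b p‖ ^ 2 * a p))
end
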